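/- arXiv:2508.15460 — 2 statements merged into one kernel-verified Lean document; each statement's English description precedes it below -/
import Mathlib

section
/- Let f be a probability density on T³ × ℝ³ with finite second velocity moments and u ∈ L²(T³;ℝ³), with v_c := ∬ v f dx dv, u_c := ∫ u dx (unit-volume torus). Define E := (1/2)∬ |v-v_c|² f dx dv + (1/2)∫ |u-u_c|² dx + (1/4)|u_c - v_c|². Then E ≤ ∬ |u-v|² f dx dv + 3 ∬ |u-u_c|² f dx dv + (1/2)∫ |u-u_c|² dx. -/
/-! Write `u - v = (u - u_c) + (u_c - v_c) - (v - v_c)` and expand `‖u - v‖²` pointwise. After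
Young's inequality only the cross term `2⟪u_c - v_c, v - v_c⟫ f` is left over, and it integrates to
zero because `v_c` is the `f`-mean of `v`. This yields the bound with `7/3 ≤ 3` in front of
`∬ ‖u - u_c‖² f`; the term `(1/2) ∫ ‖u - u_c‖²` occurs on both sides. -/

open MeasureTheory
open scoped RealInnerProductSpace

noncomputable section

abbrev T3 := AddCircle (1 : ℝ) × AddCircle (1 : ℝ) × AddCircle (1 : ℝ)
abbrev E3 := EuclideanSpace ℝ (Fin 3)

section

variable {α E : Type*} [MeasurableSpace α] {μ : Measure α} [NormedAddCommGroup E] {f : α → ℝ}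

theorem MeasureTheory.Integrable.norm_sub_sq_mul (hf_nn : ∀ x, 0 ≤ f x)
    (hf : AEStronglyMeasurable f μ) {g h : α → E} (hg : AEStronglyMeasurable g μ)
    (hh : AEStronglyMeasurable h μ) (hgf : Integrable (fun x => ‖g x‖^2 * f x) μ)
    (hhf : Integrable (fun x => ‖h x‖^2 * f x) μ) :
    Integrable (fun x => ‖g x - h x‖^2 * f x) μ := by
  refine ((hgf.const_mul 2).add (hhf.const_mul 2)).mono' (((hg.sub hh).norm.pow 2).mul hf) ?_
  refine Filter.Eventually.of_forall fun x => ?_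
  rw [Pi.add_apply, Real.norm_of_nonneg (mul_nonneg (sq_nonneg _) (hf_nn x))]
  have hsq : ‖g x - h x‖^2 ≤ 2 * ‖g x‖^2 + 2 * ‖h x‖^2 := by
    nlinarith [norm_sub_le (g x) (h x), norm_nonneg (g x - h x), sq_nonneg (‖g x‖ - ‖h x‖)]
  nlinarith [mul_le_mul_of_nonneg_right hsq (hf_nn x)]

variable [InnerProductSpace ℝ E]

/-- The constants come from the Young inequalities `2 ⟪a, b⟫ ≤ ‖b‖²/2 + 2 ‖a‖²` and
`-2 ⟪a, c⟫ ≤ 3 ‖c‖²/4 + 4 ‖a‖²/3` for `a = u - uc`, `b = v - vc`, `c = uc - vc`. -/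
theorem half_norm_sub_sq_add_quarter_norm_sub_sq_le (u v uc vc : E) :
    (1/2) * ‖v - vc‖^2 + (1/4) * ‖uc - vc‖^2
      ≤ ‖u - v‖^2 + (7/3) * ‖u - uc‖^2 + 2 * ⟪uc - vc, v - vc⟫ := by
  have hsplit : u - v = (u - uc) + (uc - vc) - (v - vc) := by abel
  have hexpand := norm_sub_sq_real ((u - uc) + (uc - vc)) (v - vc)
  rw [norm_add_sq_real, inner_add_left] at hexpand
  rw [hsplit, hexpand]
  have hab := le_of_abs_le (abs_real_inner_le_norm (u - uc) (v - vc))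
  have hac := neg_le_of_abs_le (abs_real_inner_le_norm (u - uc) (uc - vc))
  nlinarith [sq_nonneg (2 * ‖u - uc‖ - ‖v - vc‖), sq_nonneg (4 * ‖u - uc‖ - 3 * ‖uc - vc‖)]

variable [CompleteSpace E]

theorem integral_smul_sub_smul_integral_eq_zero (hf : Integrable f μ)
    (hf_mass : ∫ x, f x ∂μ = 1) {V : α → E} (hfV : Integrable (fun x => f x • V x) μ) :
    ∫ x, (f x • V x - f x • ∫ y, f y • V y ∂μ) ∂μ = 0 := by
  rw [integral_sub hfV (hf.smul_const _), integral_smul_const, hf_mass, one_smul, sub_self]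

theorem weighted_modulated_energy_le (hf_nn : ∀ x, 0 ≤ f x) (hf : Integrable f μ)
    (hf_mass : ∫ x, f x ∂μ = 1) {U V : α → E} (hU : AEStronglyMeasurable U μ)
    (hV : AEStronglyMeasurable V μ) (hUf : Integrable (fun x => ‖U x‖^2 * f x) μ)
    (hVf : Integrable (fun x => ‖V x‖^2 * f x) μ) (hfV : Integrable (fun x => f x • V x) μ)
    {vc : E} (hvc : vc = ∫ x, f x • V x ∂μ) (uc : E) :
    (1/2) * (∫ x, ‖V x - vc‖^2 * f x ∂μ) + (1/4) * ‖uc - vc‖^2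
      ≤ (∫ x, ‖U x - V x‖^2 * f x ∂μ) + (7/3) * (∫ x, ‖U x - uc‖^2 * f x ∂μ) := by
  have hconst (w : E) : Integrable (fun x => ‖w‖^2 * f x) μ := hf.const_mul _
  have hf_m := hf.aestronglyMeasurable
  have hVvc := hVf.norm_sub_sq_mul hf_nn hf_m hV aestronglyMeasurable_const (hconst vc)
  have hUV := hUf.norm_sub_sq_mul hf_nn hf_m hU hV hVf
  have hUuc := hUf.norm_sub_sq_mul hf_nn hf_m hU aestronglyMeasurable_const (hconst uc)
  have hcentred := integral_smul_sub_smul_integral_eq_zero hf hf_mass hfV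
  rw [← hvc] at hcentred
  have hcross : Integrable (fun x => f x • V x - f x • vc) μ := hfV.sub (hf.smul_const vc)
  have hpointwise (x : α) :
      (1/2) * (‖V x - vc‖^2 * f x) + (1/4) * (‖uc - vc‖^2 * f x)
        ≤ ‖U x - V x‖^2 * f x + (7/3) * (‖U x - uc‖^2 * f x)
          + 2 * ⟪uc - vc, f x • V x - f x • vc⟫ := by
    rw [← smul_sub, real_inner_smul_right]
    nlinarith [mul_le_mul_of_nonneg_right
      (half_norm_sub_sq_add_quarter_norm_sub_sq_le (U x) (V x) uc vc) (hf_nn x)]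
  have hcross_int : Integrable (fun x => 2 * ⟪uc - vc, f x • V x - f x • vc⟫) μ :=
    (hcross.const_inner (uc - vc)).const_mul 2
  have hUV_Uuc : Integrable (fun x => ‖U x - V x‖^2 * f x + (7/3) * (‖U x - uc‖^2 * f x)) μ :=
    hUV.add (hUuc.const_mul _)
  calc (1/2) * (∫ x, ‖V x - vc‖^2 * f x ∂μ) + (1/4) * ‖uc - vc‖^2
      = ∫ x, (1/2) * (‖V x - vc‖^2 * f x) + (1/4) * (‖uc - vc‖^2 * f x) ∂μ := by
        rw [integral_add (hVvc.const_mul _) ((hconst _).const_mul _), integral_const_mul,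
          integral_const_mul, integral_const_mul, hf_mass, mul_one]
    _ ≤ ∫ x, ‖U x - V x‖^2 * f x + (7/3) * (‖U x - uc‖^2 * f x)
          + 2 * ⟪uc - vc, f x • V x - f x • vc⟫ ∂μ :=
        integral_mono ((hVvc.const_mul _).add ((hconst _).const_mul _)) (hUV_Uuc.add hcross_int)
          hpointwise
    _ = (∫ x, ‖U x - V x‖^2 * f x ∂μ) + (7/3) * (∫ x, ‖U x - uc‖^2 * f x ∂μ) := by
        rw [integral_add hUV_Uuc hcross_int, integral_add hUV (hUuc.const_mul _), integral_const_mul,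
          integral_const_mul, integral_inner hcross, hcentred, inner_zero_right, mul_zero,
          add_zero]

end

theorem modulated_energy_bound_general
    (f : T3 × E3 → ℝ) (u : T3 → E3) (v_c u_c : E3) (E : ℝ)
    (hf_nn : ∀ z, 0 ≤ f z)
    (hf_int : Integrable f)
    (hf_mass : ∫ z, f z = 1)
    (hmom1 : Integrable (fun z : T3 × E3 => f z • z.2))
    (hmom2 : Integrable (fun z : T3 × E3 => ‖z.2‖^2 * f z))
    (hu_int : Integrable u)
    (huf_sq : Integrable (fun z : T3 × E3 => ‖u z.1‖^2 * f z))
    (hvc : v_c = ∫ z : T3 × E3, f z • z.2)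
    (hE : E = (1/2) * (∫ z : T3 × E3, ‖z.2 - v_c‖^2 * f z)
        + (1/2) * (∫ x : T3, ‖u x - u_c‖^2)
        + (1/4) * ‖u_c - v_c‖^2) :
    E ≤ (∫ z : T3 × E3, ‖u z.1 - z.2‖^2 * f z)
        + 3 * (∫ z : T3 × E3, ‖u z.1 - u_c‖^2 * f z)
        + (1/2) * (∫ x : T3, ‖u x - u_c‖^2) := by
  have hu_m : AEStronglyMeasurable (fun z : T3 × E3 => u z.1) volume := by
    rw [Measure.volume_eq_prod]
    exact hu_int.aestronglyMeasurable.comp_fst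
  have hbound := weighted_modulated_energy_le hf_nn hf_int hf_mass hu_m
    measurable_snd.aestronglyMeasurable huf_sq hmom2 hmom1 hvc u_c
  have hG_nonneg : 0 ≤ ∫ z : T3 × E3, ‖u z.1 - u_c‖^2 * f z :=
    integral_nonneg fun z => mul_nonneg (sq_nonneg _) (hf_nn z)
  rw [hE]
  linarith

theorem modulated_energy_bound
    (f : T3 × E3 → ℝ) (u : T3 → E3) (v_c u_c : E3) (E : ℝ)
    (hf_nn : ∀ z, 0 ≤ f z)
    (hf_int : Integrable f)
    (hf_mass : ∫ z, f z = 1)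
    (hmom1 : Integrable (fun z : T3 × E3 => f z • z.2))
    (hmom2 : Integrable (fun z : T3 × E3 => ‖z.2‖^2 * f z))
    (hu_int : Integrable u)
    (hu_sq : Integrable (fun x : T3 => ‖u x‖^2))
    (huf_sq : Integrable (fun z : T3 × E3 => ‖u z.1‖^2 * f z))
    (huf : Integrable (fun z : T3 × E3 => f z • u z.1))
    (hvc : v_c = ∫ z : T3 × E3, f z • z.2)
    (huc : u_c = ∫ x : T3, u x)
    (hE : E = (1/2) * (∫ z : T3 × E3, ‖z.2 - v_c‖^2 * f z)
        + (1/2) * (∫ x : T3, ‖u x - u_c‖^2)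
        + (1/4) * ‖u_c - v_c‖^2) :
    E ≤ (∫ z : T3 × E3, ‖u z.1 - z.2‖^2 * f z)
        + 3 * (∫ z : T3 × E3, ‖u z.1 - u_c‖^2 * f z)
        + (1/2) * (∫ x : T3, ‖u x - u_c‖^2) :=
  modulated_energy_bound_general f u v_c u_c E hf_nn hf_int hf_mass hmom1 hmom2 hu_int huf_sq hvc hE

end
end

section
/- Let E : [0,∞) → [0,∞) be differentiable, C₀ > 0, p > 2, and suppose that for each t ≥ 0 either E'(t) + C₀E(t)^{p/2} ≤ 0 or E'(t) + C₀E(t) ≤ 0. If additionally E(0) ≤ 1, then E(t) ≤ max(E(0) e^{-C₀ t}, (E(0)^{(2-p)/2} + C₀(p/2-1)t)^{-2/(p-2)}) for all t ≥ 0, and in particular E(t) → 0 as t → ∞. -/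
/-!
Both alternatives force `E' ≤ 0`, so `E` decreases and `E ≤ E 0 ≤ 1`; then `E ^ (p/2) ≤ E`, so the
linear alternative implies the superlinear one and `E' ≤ -C₀ E ^ (p/2)` holds at every time.
Integrating this Bernoulli inequality for `E ^ ((2 - p)/2)` gives the algebraic bound, which is
already the second term of the maximum and tends to `0`.
-/

open Filter Set

section Monotonicity

variable {D : Set ℝ} {f f' : ℝ → ℝ}

theorem monotoneOn_of_hasDerivAt_nonneg (hD : Convex ℝ D)
    (hf : ∀ x ∈ D, HasDerivAt f (f' x) x) (hf' : ∀ x ∈ D, 0 ≤ f' x) : MonotoneOn f D :=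
  monotoneOn_of_hasDerivWithinAt_nonneg hD
    (fun x hx ↦ (hf x hx).continuousAt.continuousWithinAt)
    (fun x hx ↦ (hf x (interior_subset hx)).hasDerivWithinAt)
    fun x hx ↦ hf' x (interior_subset hx)

theorem antitoneOn_of_hasDerivAt_nonpos (hD : Convex ℝ D)
    (hf : ∀ x ∈ D, HasDerivAt f (f' x) x) (hf' : ∀ x ∈ D, f' x ≤ 0) : AntitoneOn f D :=
  antitoneOn_of_hasDerivWithinAt_nonpos hD
    (fun x hx ↦ (hf x hx).continuousAt.continuousWithinAt)
    (fun x hx ↦ (hf x (interior_subset hx)).hasDerivWithinAt)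
    fun x hx ↦ hf' x (interior_subset hx)

end Monotonicity

section Bernoulli

variable {f f' : ℝ → ℝ} {α C a b : ℝ}

/-- `f' ≤ -C f ^ α` says exactly that `(f ^ (1 - α))' ≥ C (α - 1)`. -/
theorem rpow_one_sub_add_le_of_hasDerivAt_le (hα : 1 < α) (hab : a ≤ b)
    (hpos : ∀ x ∈ Icc a b, 0 < f x) (hf : ∀ x ∈ Icc a b, HasDerivAt f (f' x) x)
    (hf' : ∀ x ∈ Icc a b, f' x ≤ -C * f x ^ α) :
    f a ^ (1 - α) + C * (α - 1) * (b - a) ≤ f b ^ (1 - α) := by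
  have hmono : MonotoneOn (fun x ↦ f x ^ (1 - α) - C * (α - 1) * x) (Icc a b) := by
    refine monotoneOn_of_hasDerivAt_nonneg (convex_Icc a b)
      (fun x hx ↦ ((hf x hx).rpow_const (Or.inl (hpos x hx).ne')).sub
        ((hasDerivAt_id x).const_mul _)) fun x hx ↦ ?_
    have hfx := hpos x hx
    have hcancel : f x ^ α * f x ^ (1 - α - 1) = 1 := by
      rw [← Real.rpow_add hfx]; simp
    have hscale : 0 ≤ (α - 1) * f x ^ (1 - α - 1) := by
      have := Real.rpow_pos_of_pos hfx (1 - α - 1); positivity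
    have hrhs : -C * f x ^ α * ((α - 1) * f x ^ (1 - α - 1)) = -(C * (α - 1)) := by
      linear_combination (-C * (α - 1)) * hcancel
    have := mul_le_mul_of_nonneg_right (hf' x hx) hscale
    simp only [mul_one]
    linarith
  have := hmono (left_mem_Icc.2 hab) (right_mem_Icc.2 hab) hab
  simp only at this
  linarith

theorem le_rpow_of_hasDerivAt_le_neg_mul_rpow (hα : 1 < α) (hC : 0 ≤ C) (hab : a ≤ b)
    (hnonneg : ∀ x ∈ Icc a b, 0 ≤ f x) (hf : ∀ x ∈ Icc a b, HasDerivAt f (f' x) x)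
    (hf' : ∀ x ∈ Icc a b, f' x ≤ -C * f x ^ α) :
    f b ≤ (f a ^ (1 - α) + C * (α - 1) * (b - a)) ^ (1 - α)⁻¹ := by
  have hgain : 0 ≤ C * (α - 1) * (b - a) :=
    mul_nonneg (mul_nonneg hC (by linarith)) (by linarith)
  rcases (hnonneg b (right_mem_Icc.2 hab)).eq_or_lt with hb | hb
  · rw [← hb]
    exact Real.rpow_nonneg (add_nonneg (Real.rpow_nonneg (hnonneg a (left_mem_Icc.2 hab)) _) hgain) _
  have hanti : AntitoneOn f (Icc a b) := antitoneOn_of_hasDerivAt_nonpos (convex_Icc a b) hf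
    fun x hx ↦ (hf' x hx).trans <| by
      have := Real.rpow_nonneg (hnonneg x hx) α; nlinarith
  have hpos : ∀ x ∈ Icc a b, 0 < f x := fun x hx ↦
    hb.trans_le (hanti hx (right_mem_Icc.2 hab) hx.2)
  have hexp : (1 - α) * (1 - α)⁻¹ = 1 := mul_inv_cancel₀ (by linarith)
  calc f b = (f b ^ (1 - α)) ^ (1 - α)⁻¹ := by
        rw [← Real.rpow_mul hb.le, hexp, Real.rpow_one]
    _ ≤ _ := Real.rpow_le_rpow_of_nonpos
        (add_pos_of_pos_of_nonneg (Real.rpow_pos_of_pos (hpos a (left_mem_Icc.2 hab)) _) hgain)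
        (rpow_one_sub_add_le_of_hasDerivAt_le hα hab hpos hf hf') (inv_nonpos.2 (by linarith))

end Bernoulli

theorem tendsto_rpow_add_mul_atTop_nhds_zero {A c s : ℝ} (hc : 0 < c) (hs : s < 0) :
    Tendsto (fun t ↦ (A + c * t) ^ s) atTop (nhds 0) := by
  have := (tendsto_rpow_neg_atTop (neg_pos.2 hs)).comp
    (tendsto_atTop_add_const_left atTop A (tendsto_id.const_mul_atTop hc))
  simpa [Function.comp_def] using this

theorem combined_gronwall_decay (E E' : ℝ → ℝ) (p C₀ : ℝ)
    (hp : 2 < p) (hC : 0 < C₀)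
    (hE_nonneg : ∀ t, 0 ≤ t → 0 ≤ E t)
    (hE_deriv : ∀ t, 0 ≤ t → HasDerivAt E (E' t) t)
    (hineq : ∀ t, 0 ≤ t →
      E' t + C₀ * E t ^ (p/2 : ℝ) ≤ 0 ∨ E' t + C₀ * E t ≤ 0)
    (hE0 : E 0 ≤ 1) :
    (∀ t, 0 ≤ t →
      E t ≤ max (E 0 * Real.exp (-C₀ * t))
        ((E 0 ^ ((2 - p)/2 : ℝ) + C₀ * (p/2 - 1) * t) ^ (-(2/(p - 2)) : ℝ))) ∧
    Tendsto E atTop (nhds 0) := by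
  have hα : 1 < p / 2 := by linarith
  have hE_antitone : AntitoneOn E (Ici 0) :=
    antitoneOn_of_hasDerivAt_nonpos (convex_Ici 0) hE_deriv fun t ht ↦ by
      have := Real.rpow_nonneg (hE_nonneg t ht) (p / 2)
      rcases hineq t ht with h | h <;> nlinarith [hE_nonneg t ht]
  have hE_bernoulli : ∀ t, 0 ≤ t → E' t ≤ -C₀ * E t ^ (p / 2) := fun t ht ↦ by
    have hE_le_one := (hE_antitone self_mem_Ici ht ht).trans hE0
    have := Real.rpow_le_self_of_le_one (hE_nonneg t ht) hE_le_one hα.le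
    rcases hineq t ht with h | h <;> nlinarith
  have hexp : ((1 - p / 2)⁻¹ : ℝ) = -(2 / (p - 2)) := by
    rw [show (1 - p / 2 : ℝ) = -((p - 2) / 2) by ring, inv_neg, inv_div]
  have hbound : ∀ t, 0 ≤ t →
      E t ≤ (E 0 ^ ((2 - p)/2 : ℝ) + C₀ * (p/2 - 1) * t) ^ (-(2/(p - 2)) : ℝ) := fun t ht ↦ by
    have := le_rpow_of_hasDerivAt_le_neg_mul_rpow hα hC.le ht
      (fun x hx ↦ hE_nonneg x hx.1) (fun x hx ↦ hE_deriv x hx.1) fun x hx ↦ hE_bernoulli x hx.1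
    rwa [hexp, sub_zero, show (1 - p / 2 : ℝ) = (2 - p) / 2 by ring] at this
  refine ⟨fun t ht ↦ le_max_of_le_right (hbound t ht), ?_⟩
  exact tendsto_of_tendsto_of_tendsto_of_le_of_le' tendsto_const_nhds
    (tendsto_rpow_add_mul_atTop_nhds_zero (mul_pos hC (by linarith))
      (neg_neg_of_pos (div_pos two_pos (by linarith))))
    (eventually_ge_atTop 0 |>.mono hE_nonneg) (eventually_ge_atTop 0 |>.mono hbound)
end
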